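/- arXiv:1401.2360 — 3 statements merged into one kernel-verified Lean document; each statement's English description precedes it below -/
import Mathlib

section
/- For every natural number n ≥ 5, there are exactly seven (n−2)-dimensional numbers in the 2^n space; that is, T(n, n−2) = 7. (The seven such numbers are 2^{n-2}, 3·2^{n-3}, 5·2^{n-3}, 7·2^{n-3}, 9·2^{n-4}, 15·2^{n-4}, and 27·2^{n-5}.) -/
/-- The dimension of a natural number: the number of prime factors counted with multiplicity. -/
def dimension (m : ℕ) : ℕ := m.primeFactorsList.length

/-- `T n d` is the number of natural numbers `m` with `1 ≤ m ≤ 2^n` and dimension `d`. -/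
def T (n d : ℕ) : ℕ :=
  ((Finset.Icc 1 (2 ^ n)).filter (fun m => dimension m = d)).card

lemma dim1 : dimension 1 = 0 := by norm_num [dimension, Nat.primeFactorsList]
lemma dim2 : dimension 2 = 1 := by norm_num [dimension, Nat.primeFactorsList]
lemma dim3 : dimension 3 = 1 := by norm_num [dimension, Nat.primeFactorsList]
lemma dim4 : dimension 4 = 2 := by norm_num [dimension, Nat.primeFactorsList]
lemma dim5 : dimension 5 = 1 := by norm_num [dimension, Nat.primeFactorsList]
lemma dim6 : dimension 6 = 2 := by norm_num [dimension, Nat.primeFactorsList]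
lemma dim7 : dimension 7 = 1 := by norm_num [dimension, Nat.primeFactorsList]
lemma dim8 : dimension 8 = 3 := by norm_num [dimension, Nat.primeFactorsList]
lemma dim9 : dimension 9 = 2 := by norm_num [dimension, Nat.primeFactorsList]
lemma dim10 : dimension 10 = 2 := by norm_num [dimension, Nat.primeFactorsList]
lemma dim11 : dimension 11 = 1 := by norm_num [dimension, Nat.primeFactorsList]
lemma dim12 : dimension 12 = 3 := by norm_num [dimension, Nat.primeFactorsList]
lemma dim13 : dimension 13 = 1 := by norm_num [dimension, Nat.primeFactorsList]
lemma dim14 : dimension 14 = 2 := by norm_num [dimension, Nat.primeFactorsList]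
lemma dim15 : dimension 15 = 2 := by norm_num [dimension, Nat.primeFactorsList]
lemma dim16 : dimension 16 = 4 := by norm_num [dimension, Nat.primeFactorsList]
lemma dim17 : dimension 17 = 1 := by norm_num [dimension, Nat.primeFactorsList]
lemma dim18 : dimension 18 = 3 := by norm_num [dimension, Nat.primeFactorsList]
lemma dim19 : dimension 19 = 1 := by norm_num [dimension, Nat.primeFactorsList]
lemma dim20 : dimension 20 = 3 := by norm_num [dimension, Nat.primeFactorsList]
lemma dim21 : dimension 21 = 2 := by norm_num [dimension, Nat.primeFactorsList]
lemma dim22 : dimension 22 = 2 := by norm_num [dimension, Nat.primeFactorsList]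
lemma dim23 : dimension 23 = 1 := by norm_num [dimension, Nat.primeFactorsList]
lemma dim24 : dimension 24 = 4 := by norm_num [dimension, Nat.primeFactorsList]
lemma dim25 : dimension 25 = 2 := by norm_num [dimension, Nat.primeFactorsList]
lemma dim26 : dimension 26 = 2 := by norm_num [dimension, Nat.primeFactorsList]
lemma dim27 : dimension 27 = 3 := by norm_num [dimension, Nat.primeFactorsList]
lemma dim28 : dimension 28 = 3 := by norm_num [dimension, Nat.primeFactorsList]
lemma dim29 : dimension 29 = 1 := by norm_num [dimension, Nat.primeFactorsList]
lemma dim30 : dimension 30 = 3 := by norm_num [dimension, Nat.primeFactorsList]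
lemma dim31 : dimension 31 = 1 := by norm_num [dimension, Nat.primeFactorsList]
lemma dim32 : dimension 32 = 5 := by norm_num [dimension, Nat.primeFactorsList]

lemma T_base : T 5 3 = 7 := by
  unfold T
  rw [Finset.filter_congr (q := fun m => m ∈ ({8,12,18,20,27,28,30} : Finset ℕ)) ?_]
  · decide
  · intro x hx
    norm_num at hx
    obtain ⟨hx1, hx2⟩ := hx
    interval_cases x <;> simp only [dim1, dim2, dim3, dim4, dim5, dim6, dim7, dim8, dim9, dim10, dim11, dim12, dim13, dim14, dim15, dim16, dim17, dim18, dim19, dim20, dim21, dim22, dim23, dim24, dim25, dim26, dim27, dim28, dim29, dim30, dim31, dim32] <;> decide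

lemma two_pow_lt_three_pow (n : ℕ) (hn : 5 ≤ n) : 2 ^ (n + 1) < 3 ^ (n - 1) := by
  induction n with
  | zero => omega
  | succ k ih =>
    rcases Nat.lt_or_ge k 5 with h | h
    · interval_cases k <;> first | omega | norm_num
    · have h1 := ih h
      have hk : k + 1 - 1 = (k - 1) + 1 := by omega
      have h2 : 2 ^ (k + 1 + 1) = 2 * 2 ^ (k + 1) := by ring
      have h3 : 3 ^ (k + 1 - 1) = 3 * 3 ^ (k - 1) := by rw [hk]; ring
      have h4 : 0 < 3 ^ (k - 1) := by positivity
      rw [h2, h3]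
      nlinarith

lemma dimension_two_mul (m : ℕ) (hm : m ≠ 0) : dimension (2 * m) = dimension m + 1 := by
  unfold dimension
  have := (Nat.perm_primeFactorsList_mul (a := 2) (b := m) (by norm_num) hm).length_eq
  rw [this, List.length_append]
  norm_num [Nat.primeFactorsList]
  omega

lemma T_step (n : ℕ) (hn : 5 ≤ n) : T (n + 1) (n - 1) = T n (n - 2) := by
  unfold T
  symm
  apply Finset.card_bij (fun m _ => 2 * m)
  · intro a ha
    simp only [Finset.mem_filter, Finset.mem_Icc] at ha ⊢
    obtain ⟨⟨h1, h2⟩, h3⟩ := ha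
    refine ⟨⟨by omega, ?_⟩, ?_⟩
    · rw [pow_succ, mul_comm]; omega
    · rw [dimension_two_mul a (by omega), h3]; omega
  · intro a ha b hb hab
    omega
  · intro b hb
    simp only [Finset.mem_filter, Finset.mem_Icc] at hb
    obtain ⟨⟨h1, h2⟩, h3⟩ := hb
    have hb0 : b ≠ 0 := by omega
    have h2b : 2 ∣ b := by
      by_contra h2b
      have hall : ∀ p ∈ b.primeFactorsList, 3 ≤ p := by
        intro p hp
        have hpp := Nat.prime_of_mem_primeFactorsList hp
        have hpd := Nat.dvd_of_mem_primeFactorsList hp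
        have hp2 : p ≠ 2 := by rintro rfl; exact h2b hpd
        have := hpp.two_le
        omega
      have h3le : 3 ^ (n - 1) ≤ b := by
        calc 3 ^ (n - 1) = 3 ^ b.primeFactorsList.length := by
              rw [show b.primeFactorsList.length = dimension b from rfl, h3]
          _ ≤ b.primeFactorsList.prod := List.pow_card_le_prod _ _ hall
          _ = b := Nat.prod_primeFactorsList hb0
      have := two_pow_lt_three_pow n hn
      omega
    obtain ⟨m, rfl⟩ := h2b
    have hm0 : m ≠ 0 := by omega
    refine ⟨m, ?_, rfl⟩
    simp only [Finset.mem_filter, Finset.mem_Icc]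
    rw [dimension_two_mul m hm0] at h3
    refine ⟨⟨by omega, ?_⟩, by omega⟩
    rw [pow_succ] at h2
    omega

/-- For n ≥ 5 there are exactly seven (n−2)-dimensional numbers in the 2^n space. -/
theorem sub_two_dim_count (n : ℕ) (hn : 5 ≤ n) : T n (n - 2) = 7 := by
  induction n, hn using Nat.le_induction with
  | base => exact T_base
  | succ k hk ih =>
    have hs : k + 1 - 2 = k - 1 := by omega
    rw [hs, T_step k hk, ih]
end

section
/- For every natural number x ≥ 1 and every n ≥ 3x, the count of (n−x)-dimensional numbers in the 2^n space equals the number of odd natural numbers q satisfying q ≤ 2^{x + Ω(q)}; that is, T(n, n−x) = #{q : q odd, q ≤ 2^{x+Ω(q)}}, a quantity independent of n. -/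
lemma dimension_mul {a b : ℕ} (ha : a ≠ 0) (hb : b ≠ 0) :
    dimension (a * b) = dimension a + dimension b := by
  unfold dimension
  rw [← List.length_append]
  exact List.Perm.length_eq (Nat.perm_primeFactorsList_mul ha hb)

lemma dimension_two_pow (a : ℕ) : dimension (2 ^ a) = a := by
  induction a with
  | zero => simp [dimension]
  | succ k ih =>
      rw [pow_succ, dimension_mul (by positivity) (by norm_num), ih]
      have : dimension 2 = 1 := by
        simp [dimension, Nat.primeFactorsList_prime (by norm_num : Nat.Prime 2)]
      omega

lemma fact_two (a q : ℕ) (hq : Odd q) : (2 ^ a * q).factorization 2 = a := by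
  have hq0 : q ≠ 0 := hq.pos.ne'
  have hnd : ¬ (2 ∣ q) := by
    rw [Nat.odd_iff] at hq; omega
  rw [Nat.factorization_mul (by positivity) hq0]
  simp [Nat.Prime.factorization_pow (by norm_num : Nat.Prime 2),
    Nat.factorization_eq_zero_of_not_dvd hnd]

lemma odd_part_eq (a q : ℕ) (hq : Odd q) :
    (2 ^ a * q) / 2 ^ ((2 ^ a * q).factorization 2) = q := by
  rw [fact_two a q hq, Nat.mul_div_cancel_left _ (by positivity)]

lemma exists_decomp (m : ℕ) (hm : m ≠ 0) : ∃ a q, Odd q ∧ m = 2 ^ a * q := by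
  refine ⟨m.factorization 2, m / 2 ^ m.factorization 2, ?_, ?_⟩
  · rw [Nat.odd_iff]
    have := Nat.not_dvd_ordCompl (by norm_num : Nat.Prime 2) hm
    omega
  · exact (Nat.ordProj_mul_ordCompl_eq_self m 2).symm


lemma three_pow_list (l : List ℕ) (h : ∀ p ∈ l, 3 ≤ p) : 3 ^ l.length ≤ l.prod := by
  induction l with
  | nil => simp
  | cons a t ih =>
      simp only [List.length_cons, List.prod_cons, pow_succ]
      rw [mul_comm (3 ^ t.length) 3]
      exact Nat.mul_le_mul (h a (by simp)) (ih fun p hp => h p (by simp [hp]))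

lemma three_pow_le_of_odd {q : ℕ} (hq : Odd q) (h1 : 1 ≤ q) : 3 ^ dimension q ≤ q := by
  have hq0 : q ≠ 0 := by omega
  have key := three_pow_list q.primeFactorsList ?_
  · rwa [Nat.prod_primeFactorsList hq0] at key
  · intro p hp
    have hpp := Nat.prime_of_mem_primeFactorsList hp
    have hdvd := Nat.dvd_of_mem_primeFactorsList hp
    have hp2 : p ≠ 2 := by
      rintro rfl
      rw [Nat.odd_iff] at hq
      omega
    have := hpp.two_le
    omega

lemma pow_aux (x k : ℕ) (hx : 1 ≤ x) : 2 ^ (x + (2 * x + 1 + k)) < 3 ^ (2 * x + 1 + k) := by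
  induction k with
  | zero =>
      have h1 : (8 : ℕ) ^ x ≤ 9 ^ x := Nat.pow_le_pow_left (by norm_num) x
      have h2 : (1 : ℕ) ≤ 8 ^ x := Nat.one_le_pow _ _ (by norm_num)
      have e1 : 2 ^ (x + (2 * x + 1 + 0)) = 2 * 8 ^ x := by
        rw [show x + (2 * x + 1 + 0) = 3 * x + 1 by ring, pow_succ, pow_mul]; ring
      have e2 : 3 ^ (2 * x + 1 + 0) = 3 * 9 ^ x := by
        rw [show 2 * x + 1 + 0 = 2 * x + 1 by ring, pow_succ, pow_mul]; ring
      rw [e1, e2]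
      calc 2 * 8 ^ x < 3 * 8 ^ x := by omega
        _ ≤ 3 * 9 ^ x := Nat.mul_le_mul_left 3 h1
  | succ k ih =>
      have e1 : x + (2 * x + 1 + (k + 1)) = (x + (2 * x + 1 + k)) + 1 := by ring
      have e2 : 2 * x + 1 + (k + 1) = (2 * x + 1 + k) + 1 := by ring
      rw [e1, e2, pow_succ, pow_succ]
      have h1 : 2 ^ (x + (2 * x + 1 + k)) * 2 < 3 ^ (2 * x + 1 + k) * 2 :=
        (Nat.mul_lt_mul_right (by norm_num)).mpr ih
      have h2 : 3 ^ (2 * x + 1 + k) * 2 ≤ 3 ^ (2 * x + 1 + k) * 3 :=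
        Nat.mul_le_mul_left _ (by norm_num)
      omega

lemma dim_le_two_x {x q : ℕ} (hx : 1 ≤ x) (hq : Odd q) (h1 : 1 ≤ q)
    (hle : q ≤ 2 ^ (x + dimension q)) : dimension q ≤ 2 * x := by
  by_contra h
  push_neg at h
  have h3 := three_pow_le_of_odd hq h1
  have key := pow_aux x (dimension q - (2 * x + 1)) hx
  rw [show 2 * x + 1 + (dimension q - (2 * x + 1)) = dimension q by omega] at key
  omega

/-- For x ≥ 1 and n ≥ 3x, T(n, n−x) equals the number of odd q with q ≤ 2^(x + Ω(q)),
    a quantity independent of n. -/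
theorem diagonal_eq_odd_count (x n : ℕ) (hx : 1 ≤ x) (hn : 3 * x ≤ n) :
    T n (n - x) = {q : ℕ | Odd q ∧ q ≤ 2 ^ (x + dimension q)}.ncard := by
  classical
  have hset : {q : ℕ | Odd q ∧ q ≤ 2 ^ (x + dimension q)} =
      ↑((Finset.Icc 1 (2 ^ (3 * x))).filter
        (fun q => Odd q ∧ q ≤ 2 ^ (x + dimension q))) := by
    ext q
    simp only [Finset.coe_filter, Set.mem_setOf_eq, Finset.mem_Icc]
    constructor
    · rintro ⟨hodd, hle⟩
      have h1 : 1 ≤ q := hodd.pos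
      have hd := dim_le_two_x hx hodd h1 hle
      exact ⟨⟨h1, le_trans hle (Nat.pow_le_pow_right (by norm_num) (by omega))⟩, hodd, hle⟩
    · rintro ⟨_, h⟩; exact h
  rw [hset, Set.ncard_coe_finset]
  unfold T
  refine Finset.card_bij' (fun m _ => m / 2 ^ m.factorization 2)
    (fun q _ => 2 ^ (n - x - dimension q) * q) ?hi ?hj ?hli ?hri
  case hi =>
    intro m hm
    simp only [Finset.mem_filter, Finset.mem_Icc] at hm ⊢
    obtain ⟨⟨h1, h2⟩, hdim⟩ := hm
    obtain ⟨a, q, hodd, rfl⟩ := exists_decomp m (by omega)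
    rw [odd_part_eq a q hodd]
    have hq1 : 1 ≤ q := hodd.pos
    have hdm : a + dimension q = n - x := by
      rw [← hdim, dimension_mul (by positivity) (by omega), dimension_two_pow]
    have hxn : x ≤ n := by omega
    have hq_le : q ≤ 2 ^ (x + dimension q) := by
      have h2a : 2 ^ n = 2 ^ a * 2 ^ (x + dimension q) := by
        rw [← pow_add]; congr 1; omega
      rw [h2a] at h2
      exact Nat.le_of_mul_le_mul_left h2 (by positivity)
    have hd2x := dim_le_two_x hx hodd hq1 hq_le
    exact ⟨⟨hq1, le_trans hq_le (Nat.pow_le_pow_right (by norm_num) (by omega))⟩, hodd, hq_le⟩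
  case hj =>
    intro q hq
    simp only [Finset.mem_filter, Finset.mem_Icc] at hq ⊢
    obtain ⟨⟨h1, _⟩, hodd, hle⟩ := hq
    have hd2x := dim_le_two_x hx hodd h1 hle
    have hdn : dimension q ≤ n - x := by omega
    refine ⟨⟨Nat.one_le_iff_ne_zero.mpr (by positivity), ?_⟩, ?_⟩
    · calc 2 ^ (n - x - dimension q) * q
          ≤ 2 ^ (n - x - dimension q) * 2 ^ (x + dimension q) := Nat.mul_le_mul_left _ hle
        _ = 2 ^ n := by rw [← pow_add]; congr 1; omega
    · rw [dimension_mul (by positivity) (by omega), dimension_two_pow]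
      omega
  case hli =>
    intro m hm
    simp only [Finset.mem_filter, Finset.mem_Icc] at hm
    obtain ⟨⟨h1, h2⟩, hdim⟩ := hm
    obtain ⟨a, q, hodd, rfl⟩ := exists_decomp m (by omega)
    simp only [odd_part_eq a q hodd]
    have hdm : a + dimension q = n - x := by
      rw [← hdim, dimension_mul (by positivity) hodd.pos.ne', dimension_two_pow]
    have : n - x - dimension q = a := by omega
    rw [this]
  case hri =>
    intro q hq
    simp only [Finset.mem_filter, Finset.mem_Icc] at hq
    exact odd_part_eq _ q hq.2.1
end

section
/- Each diagonal series of the triangle is nondecreasing: for all natural numbers x and n with n ≥ x, T(n+1, (n+1)−x) ≥ T(n, n−x). (Multiplication by 2 injects the (n−x)-dimensional numbers of the 2^n space into the (n+1−x)-dimensional numbers of the 2^{n+1} space.) -/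
lemma Nat.Prime.dimension_mul_left {p m : ℕ} (hp : p.Prime) (hm : m ≠ 0) :
    dimension (p * m) = dimension m + 1 := by
  rw [dimension_mul hp.ne_zero hm, dimension, Nat.primeFactorsList_prime hp, add_comm]
  rfl

lemma T_le_T_succ_succ (n d : ℕ) : T n d ≤ T (n + 1) (d + 1) := by
  refine Finset.card_le_card_of_injOn (2 * ·) ?_ (fun a _ b _ h => by simpa using h)
  intro m hm
  simp only [Finset.coe_filter, Finset.mem_Icc, Set.mem_ofPred_eq] at hm ⊢
  obtain ⟨⟨hm_pos, hm_le⟩, hm_dim⟩ := hm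
  refine ⟨⟨by omega, by rw [pow_succ']; omega⟩, ?_⟩
  rw [Nat.prime_two.dimension_mul_left (by omega), hm_dim]

/-- Each diagonal series of the triangle is nondecreasing. -/
theorem diagonal_mono (x n : ℕ) (hxn : x ≤ n) :
    T n (n - x) ≤ T (n + 1) (n + 1 - x) := by
  rw [show n + 1 - x = n - x + 1 by omega]
  exact T_le_T_succ_succ n (n - x)
end
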